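/- arXiv:1905.01261 — 2 statements merged into one kernel-verified Lean document; each statement's English description precedes it below -/
import Mathlib

section
/- Consider the coupled system on ℝⁿ × ℝ: p̃' = (½ − α)r(t) − K p̃ and α' = γ(p̃ᵀ r(t) − (α − ½)(k + |p̃ᵀ r(t)|)), where K is symmetric positive definite, γ, k > 0, and r : ℝ → ℝⁿ is continuous and bounded. Then V(p̃, α) := ½‖p̃‖² + (1/γ)·½(α − ½)² satisfies, along any solution, dV/dt = −(k + |p̃ᵀ r(t)|)(α − ½)² − p̃ᵀ K p̃ ≤ 0. -/
open Matrix
open scoped RealInnerProductSpace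

theorem EuclideanSpace.inner_equiv_symm {ι : Type*} [Fintype ι] (x : EuclideanSpace ℝ ι)
    (v : ι → ℝ) : ⟪x, (EuclideanSpace.equiv ι ℝ).symm v⟫ = EuclideanSpace.equiv ι ℝ x ⬝ᵥ v :=
  dotProduct_comm _ _

theorem HasDerivAt.half_norm_sq_add_half_sq_div {F : Type*} [NormedAddCommGroup F]
    [InnerProductSpace ℝ F] {p : ℝ → F} {α : ℝ → ℝ} {p' : F} {α' γ c t : ℝ}
    (hp : HasDerivAt p p' t) (hα : HasDerivAt α α' t) :
    HasDerivAt (fun s => 1/2 * ‖p s‖^2 + 1/γ * (1/2 * (α s - c)^2))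
      (⟪p t, p'⟫ + 1/γ * ((α t - c) * α')) t := by
  refine ((hp.norm_sq.const_mul (1/2)).add
    ((((hα.sub_const c).pow 2).const_mul (1/2)).const_mul (1/γ))).congr_deriv ?_
  norm_num
  ring

theorem coupled_system_lyapunov_derivative_general
    {n : ℕ} (K : Matrix (Fin n) (Fin n) ℝ) (hK : K.PosDef)
    (γ k : ℝ) (hγ : 0 < γ) (hk : 0 < k)
    (r : ℝ → EuclideanSpace ℝ (Fin n))
    (p : ℝ → EuclideanSpace ℝ (Fin n)) (α : ℝ → ℝ)
    (hp : ∀ t : ℝ, HasDerivAt p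
      ((1/2 - α t) • r t - (EuclideanSpace.equiv (Fin n) ℝ).symm (K.mulVec (p t))) t)
    (hα : ∀ t : ℝ, HasDerivAt α
      (γ * (⟪p t, r t⟫ - (α t - 1/2) * (k + |⟪p t, r t⟫|))) t)
    (V : ℝ → ℝ)
    (hV : ∀ t, V t = (1/2) * ‖p t‖^2 + (1/γ) * ((1/2) * (α t - 1/2)^2)) :
    ∀ t : ℝ,
      HasDerivAt V (-((k + |⟪p t, r t⟫|) * (α t - 1/2)^2
          + (EuclideanSpace.equiv (Fin n) ℝ) (p t) ⬝ᵥ K.mulVec (p t))) t ∧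
      -((k + |⟪p t, r t⟫|) * (α t - 1/2)^2
          + (EuclideanSpace.equiv (Fin n) ℝ) (p t) ⬝ᵥ K.mulVec (p t)) ≤ 0 := by
  intro t
  obtain rfl : V = fun s => 1/2 * ‖p s‖^2 + 1/γ * (1/2 * (α s - 1/2)^2) := funext hV
  refine ⟨?_, ?_⟩
  · convert (hp t).half_norm_sq_add_half_sq_div (hα t) using 1
    -- the update law for `α` is designed so that the cross terms `±(α - ½)⟪p, r⟫` cancel
    rw [inner_sub_right, real_inner_smul_right, EuclideanSpace.inner_equiv_symm]
    field_simp
    ring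
  · set x := EuclideanSpace.equiv (Fin n) ℝ (p t)
    have hQ : 0 ≤ x ⬝ᵥ K *ᵥ x := by simpa using hK.posSemidef.dotProduct_mulVec_nonneg x
    have hA : 0 ≤ (k + |⟪p t, r t⟫|) * (α t - 1/2)^2 := by positivity
    exact neg_nonpos.2 (add_nonneg hA hQ)

/-- Lyapunov derivative for the coupled system p̃' = (½−α)r(t) − Kp̃,
α' = γ(p̃ᵀr − (α−½)(k + |p̃ᵀr|)): with V = ½‖p̃‖² + (1/γ)·½(α−½)², along any
solution dV/dt = −(k + |p̃ᵀr|)(α−½)² − p̃ᵀKp̃ ≤ 0. -/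
theorem coupled_system_lyapunov_derivative
    {n : ℕ} (K : Matrix (Fin n) (Fin n) ℝ) (hK : K.PosDef)
    (γ k : ℝ) (hγ : 0 < γ) (hk : 0 < k)
    (r : ℝ → EuclideanSpace ℝ (Fin n)) (hrc : Continuous r)
    (hrb : ∃ M : ℝ, ∀ t, ‖r t‖ ≤ M)
    (p : ℝ → EuclideanSpace ℝ (Fin n)) (α : ℝ → ℝ)
    (hp : ∀ t : ℝ, HasDerivAt p
      ((1/2 - α t) • r t - (EuclideanSpace.equiv (Fin n) ℝ).symm (K.mulVec (p t))) t)
    (hα : ∀ t : ℝ, HasDerivAt α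
      (γ * (⟪p t, r t⟫ - (α t - 1/2) * (k + |⟪p t, r t⟫|))) t)
    (V : ℝ → ℝ)
    (hV : ∀ t, V t = (1/2) * ‖p t‖^2 + (1/γ) * ((1/2) * (α t - 1/2)^2)) :
    ∀ t : ℝ,
      HasDerivAt V (-((k + |⟪p t, r t⟫|) * (α t - 1/2)^2
          + (EuclideanSpace.equiv (Fin n) ℝ) (p t) ⬝ᵥ K.mulVec (p t))) t ∧
      -((k + |⟪p t, r t⟫|) * (α t - 1/2)^2
          + (EuclideanSpace.equiv (Fin n) ℝ) (p t) ⬝ᵥ K.mulVec (p t)) ≤ 0 :=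
  coupled_system_lyapunov_derivative_general K hK γ k hγ hk r p α hp hα V hV
end

section
/- Let (η, ε) : ℝ → ℝ × ℝ³ be a unit quaternion satisfying η' = −½εᵀω, ε' = ½(ηI₃ − S(ε))ω, and let (η_d, ε_d) be a constant unit quaternion. Then V_ω = (η_d − η)² + ‖ε_d − ε‖² satisfies d/dt V_ω = −ε̃ᵀ ω, where ε̃ is the vector part of the error quaternion Q_d * Q⁻¹. -/
open Matrix

/-- For a unit quaternion (η, ε) propagating under η' = −½εᵀω,
ε' = ½(ηI₃ − S(ε))ω, and a constant unit target quaternion (η_d, ε_d), the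
Lyapunov function V_ω = (η_d − η)² + ‖ε_d − ε‖² satisfies dV_ω/dt = −ε̃ᵀω, where
ε̃ = η ε_d − η_d ε − ε_d × ε is the vector part of the error quaternion
Q_d * Q⁻¹. -/
theorem quaternion_lyapunov_derivative
    (η : ℝ → ℝ) (ε ω : ℝ → Fin 3 → ℝ) (hω : Continuous ω)
    (ηd : ℝ) (εd : Fin 3 → ℝ)
    (hunit_d : ηd^2 + ∑ i, (εd i)^2 = 1)
    (hunit : ∀ t : ℝ, (η t)^2 + ∑ i, (ε t i)^2 = 1)
    (hη : ∀ t : ℝ, HasDerivAt η (-(1/2) * (ε t ⬝ᵥ ω t)) t)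
    (hε : ∀ t : ℝ, HasDerivAt ε
      ((1/2 : ℝ) • (η t • ω t - crossProduct (ε t) (ω t))) t) :
    ∀ t : ℝ, HasDerivAt (fun s => (ηd - η s)^2 + ∑ i, (εd i - ε s i)^2)
      (-((η t • εd - ηd • ε t - crossProduct εd (ε t)) ⬝ᵥ ω t)) t := by
  intro t
  have hεi : ∀ i, HasDerivAt (fun s => ε s i)
      (((1/2 : ℝ) • (η t • ω t - crossProduct (ε t) (ω t))) i) t :=
    fun i => hasDerivAt_pi.mp (hε t) i
  have h1 : HasDerivAt (fun s => (ηd - η s)^2)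
      (2 * (ηd - η t) ^ 1 * (0 - (-(1/2) * (ε t ⬝ᵥ ω t)))) t :=
    ((hasDerivAt_const t ηd).sub (hη t)).pow 2
  have h2 : HasDerivAt (fun s => ∑ i, (εd i - ε s i)^2)
      (∑ i, 2 * (εd i - ε t i) ^ 1 *
        (0 - ((1/2 : ℝ) • (η t • ω t - crossProduct (ε t) (ω t))) i)) t :=
    HasDerivAt.fun_sum fun i _ =>
      ((hasDerivAt_const t (εd i)).sub (hεi i)).pow 2
  have h := h1.fun_add h2
  refine h.congr_deriv ?_
  simp only [Fin.sum_univ_three, dotProduct, crossProduct, Pi.smul_apply,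
    Pi.sub_apply, smul_eq_mul, LinearMap.mk₂_apply, Matrix.cons_val_zero,
    Matrix.cons_val_one, Matrix.head_cons, Matrix.cons_val_two, Matrix.tail_cons]
  ring
end
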